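/- Let N ≥ 1 be an integer. Then for every real number p with p < 2N+1, the function y ↦ 1/(y^p·G_N(y)) is integrable on (0, 1). -/

import Mathlib

open Real MeasureTheory Filter Set Topology

/-- Modified Bessel function of the first kind of integer order `N`. -/
noncomputable def besselI (N : ℕ) (x : ℝ) : ℝ :=
  ∑' n : ℕ, (x / 2) ^ (2 * n + N) / ((Nat.factorial n : ℝ) * (Nat.factorial (n + N) : ℝ))

/-- Modified Bessel function of the second kind of integer order `N`. -/
noncomputable def besselK (N : ℕ) (x : ℝ) : ℝ :=
  ∫ s in Ioi (0 : ℝ), Real.exp (-x * Real.cosh s) * Real.cosh (N * s)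

/-- `G_N(x) = K_N(x)^2 + π^2 I_N(x)^2`. -/
noncomputable def G (N : ℕ) (x : ℝ) : ℝ :=
  besselK N x ^ 2 + Real.pi ^ 2 * besselI N x ^ 2

/-! Near `0` the integrand is dominated by a multiple of `y ^ (2N - p)`, which is integrable since
`2N - p > -1`. Indeed `G_N ≥ K_N²`, and `K_N(y) ≥ c · y^{-N}` for `0 < y ≤ 1`: on the interval
`(-log y, 1 - log y]` of length one, `y cosh s ≤ e` and `cosh (N s) ≥ y^{-N} / 2`. -/

lemma Real.exp_div_two_le_cosh (x : ℝ) : exp x / 2 ≤ cosh x := by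
  rw [cosh_eq]
  linarith [exp_pos (-x)]

lemma Real.cosh_le_exp_of_nonneg {x : ℝ} (hx : 0 ≤ x) : cosh x ≤ exp x := by
  rw [cosh_eq]
  linarith [exp_le_exp.2 (show -x ≤ x by linarith)]

lemma summable_besselI_series (N : ℕ) (x : ℝ) :
    Summable fun n : ℕ => (x / 2) ^ (2 * n + N) /
      ((Nat.factorial n : ℝ) * (Nat.factorial (n + N) : ℝ)) := by
  refine Summable.of_norm_bounded
    ((summable_pow_div_factorial ((|x| / 2) ^ 2)).mul_left ((|x| / 2) ^ N)) fun n => ?_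
  have hfac : (1 : ℝ) ≤ Nat.factorial (n + N) := mod_cast Nat.factorial_pos _
  calc ‖(x / 2) ^ (2 * n + N) / ((Nat.factorial n : ℝ) * (Nat.factorial (n + N) : ℝ))‖
      = (|x| / 2) ^ (2 * n + N) / ((Nat.factorial n : ℝ) * (Nat.factorial (n + N) : ℝ)) := by
        simp
    _ ≤ (|x| / 2) ^ (2 * n + N) / ((Nat.factorial n : ℝ) * 1) := by gcongr
    _ = (|x| / 2) ^ N * (((|x| / 2) ^ 2) ^ n / Nat.factorial n) := by rw [pow_add, pow_mul]; ring

@[fun_prop]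
lemma measurable_besselI (N : ℕ) : Measurable (besselI N) :=
  measurable_of_tendsto_metrizable (fun _ => by fun_prop)
    (tendsto_pi_nhds.2 fun x => (summable_besselI_series N x).hasSum.tendsto_sum_nat)

@[fun_prop]
lemma measurable_besselK (N : ℕ) : Measurable (besselK N) :=
  (show StronglyMeasurable fun q : ℝ × ℝ => exp (-q.1 * cosh q.2) * cosh (N * q.2) from
    (by fun_prop : Continuous _).stronglyMeasurable).integral_prod_right'.measurable

@[fun_prop]
lemma measurable_G (N : ℕ) : Measurable (G N) := by
  unfold G
  fun_prop

-- `exp (-u) ≤ (N + 1)! / u ^ (N + 1)` with `u = x eˢ / 2 ≤ x cosh s` beats the growth `e^{Ns}`.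
lemma besselK_integrand_le (N : ℕ) {x s : ℝ} (hx : 0 < x) (hs : 0 ≤ s) :
    exp (-x * cosh s) * cosh (N * s) ≤ (N + 1).factorial * (2 / x) ^ (N + 1) * exp (-s) := by
  set u := x * exp s / 2 with hu_def
  have hu : 0 < u := by positivity
  have hexp_u : exp (-x * cosh s) ≤ (N + 1).factorial / u ^ (N + 1) := by
    calc exp (-x * cosh s) ≤ exp (-u) := by
          gcongr
          linarith [mul_le_mul_of_nonneg_left (exp_div_two_le_cosh s) hx.le]
      _ = 1 / exp u := by rw [exp_neg, one_div]
      _ ≤ 1 / (u ^ (N + 1) / (N + 1).factorial) := by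
          gcongr
          exact pow_div_factorial_le_exp _ hu.le _
      _ = (N + 1).factorial / u ^ (N + 1) := by rw [one_div_div]
  calc exp (-x * cosh s) * cosh (N * s)
      ≤ (N + 1).factorial / u ^ (N + 1) * exp (N * s) := by
        gcongr
        exact cosh_le_exp_of_nonneg (by positivity)
    _ = (N + 1).factorial * (2 / x) ^ (N + 1) * exp (-s) := by
        have : exp (N * s) = exp s ^ (N + 1) * exp (-s) := by
          rw [← exp_nat_mul, ← exp_add]; push_cast; ring_nf
        rw [this, hu_def, div_pow, div_pow, mul_pow]
        field_simp

lemma integrableOn_besselK_integrand (N : ℕ) {x : ℝ} (hx : 0 < x) :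
    IntegrableOn (fun s => exp (-x * cosh s) * cosh (N * s)) (Ioi 0) := by
  refine (((integrableOn_exp_neg_Ioi 0).const_mul
    ((N + 1).factorial * (2 / x) ^ (N + 1)))).mono' (by fun_prop) ?_
  filter_upwards [ae_restrict_mem measurableSet_Ioi] with s hs
  rw [Real.norm_of_nonneg (by positivity)]
  exact besselK_integrand_le N hx (le_of_lt hs)

lemma rpow_neg_le_besselK (N : ℕ) {y : ℝ} (hy0 : 0 < y) (hy1 : y ≤ 1) :
    exp (-exp 1) / 2 * y ^ (-(N : ℝ)) ≤ besselK N y := by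
  set a := -log y
  have ha : 0 ≤ a := neg_nonneg.2 (log_nonpos hy0.le hy1)
  have hya : y * exp a = 1 := by rw [exp_neg, exp_log hy0, mul_inv_cancel₀ hy0.ne']
  have hbound : ∀ s ∈ Ioc a (a + 1),
      exp (-exp 1) / 2 * y ^ (-(N : ℝ)) ≤ exp (-y * cosh s) * cosh (N * s) := by
    rintro s ⟨has, hsa⟩
    have hcosh : y * cosh s ≤ exp 1 := calc
      y * cosh s ≤ y * exp (a + 1) := by
        gcongr
        exact (cosh_le_exp_of_nonneg (by linarith)).trans (exp_le_exp.2 hsa)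
      _ = exp 1 := by rw [exp_add, ← mul_assoc, hya, one_mul]
    have hpow : y ^ (-(N : ℝ)) ≤ exp (N * s) := by
      rw [rpow_def_of_pos hy0, exp_le_exp]
      nlinarith [(Nat.cast_nonneg N : (0 : ℝ) ≤ N)]
    calc exp (-exp 1) / 2 * y ^ (-(N : ℝ))
        ≤ exp (-y * cosh s) * (exp (N * s) / 2) := by
          rw [div_mul_eq_mul_div, mul_div_assoc]
          gcongr
          linarith
      _ ≤ exp (-y * cosh s) * cosh (N * s) := by gcongr; exact exp_div_two_le_cosh _
  have hint := integrableOn_besselK_integrand N hy0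
  calc exp (-exp 1) / 2 * y ^ (-(N : ℝ))
      = exp (-exp 1) / 2 * y ^ (-(N : ℝ)) * volume.real (Ioc a (a + 1)) := by simp
    _ ≤ ∫ s in Ioc a (a + 1), exp (-y * cosh s) * cosh (N * s) :=
        setIntegral_ge_of_const_le_real measurableSet_Ioc measure_Ioc_lt_top.ne hbound
          (hint.mono_set fun s hs => ha.trans_lt hs.1)
    _ ≤ besselK N y :=
        setIntegral_mono_set hint (ae_of_all _ fun _ => by positivity)
          (ae_of_all _ fun s hs => ha.trans_lt hs.1)

lemma rpow_neg_le_G (N : ℕ) {y : ℝ} (hy0 : 0 < y) (hy1 : y ≤ 1) :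
    (exp (-exp 1) / 2) ^ 2 * y ^ (-(2 * N : ℝ)) ≤ G N y := calc
  (exp (-exp 1) / 2) ^ 2 * y ^ (-(2 * N : ℝ)) = (exp (-exp 1) / 2 * y ^ (-(N : ℝ))) ^ 2 := by
    rw [mul_pow, ← rpow_natCast (y ^ _), ← rpow_mul hy0.le]
    push_cast
    ring_nf
  _ ≤ besselK N y ^ 2 := by gcongr; exact rpow_neg_le_besselK N hy0 hy1
  _ ≤ G N y := le_add_of_nonneg_right (by positivity)

lemma one_div_rpow_mul_G_le (N : ℕ) (p : ℝ) {y : ℝ} (hy0 : 0 < y) (hy1 : y ≤ 1) :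
    1 / (y ^ p * G N y) ≤ ((exp (-exp 1) / 2) ^ 2)⁻¹ * y ^ (2 * N - p) := by
  have hlow := rpow_neg_le_G N hy0 hy1
  have hpos : 0 < y ^ p * ((exp (-exp 1) / 2) ^ 2 * y ^ (-(2 * N : ℝ))) := by positivity
  calc 1 / (y ^ p * G N y)
      ≤ 1 / (y ^ p * ((exp (-exp 1) / 2) ^ 2 * y ^ (-(2 * N : ℝ)))) := by gcongr
    _ = ((exp (-exp 1) / 2) ^ 2)⁻¹ * y ^ (2 * N - p) := by
        rw [mul_left_comm, ← rpow_add hy0, one_div, mul_inv, ← rpow_neg hy0.le]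
        ring_nf

theorem integrable_inv_rpow_mul_G_Ioo_zero_one_general (N : ℕ) (p : ℝ)
    (hp : p < 2 * N + 1) :
    IntegrableOn (fun y : ℝ => 1 / (y ^ p * G N y)) (Ioo (0 : ℝ) 1) := by
  have hdom : IntegrableOn (fun y : ℝ => ((exp (-exp 1) / 2) ^ 2)⁻¹ * y ^ (2 * N - p))
      (Ioo 0 1) :=
    ((intervalIntegral.integrableOn_Ioo_rpow_iff one_pos).2 (by linarith)).const_mul _
  refine hdom.mono' (Measurable.aestronglyMeasurable (by fun_prop)) ?_
  filter_upwards [ae_restrict_mem measurableSet_Ioo] with y ⟨hy0, hy1⟩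
  have hG : 0 < G N y := lt_of_lt_of_le (by positivity) (rpow_neg_le_G N hy0 hy1.le)
  rw [Real.norm_of_nonneg (by positivity)]
  exact one_div_rpow_mul_G_le N p hy0 hy1.le

theorem integrable_inv_rpow_mul_G_Ioo_zero_one (N : ℕ) (hN : 1 ≤ N) (p : ℝ)
    (hp : p < 2 * N + 1) :
    IntegrableOn (fun y : ℝ => 1 / (y ^ p * G N y)) (Ioo (0 : ℝ) 1) :=
  integrable_inv_rpow_mul_G_Ioo_zero_one_general N p hp
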